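/- If Σ_j p_τ(j)(ℓ_i − ℓ_j) ≥ Δ⁺ for some Δ⁺ ≥ 0 (the 'sufficiently accurate' condition for index i), then ∂p_τ(i)/∂τ ≤ −p_τ(i)·Δ⁺/τ² ≤ 0. -/

import Mathlib

open Real Finset

/-!
Differentiating in the temperature gives `∂p_τ(i)/∂τ = -p_τ(i) · ∑ j, p_τ(j) (ℓ_i - ℓ_j) / τ²`:
the sum is the gap between `ℓ_i` and the `p_τ`-mean of the logits, so the hypothesis bounds the
derivative from above, and the bound is nonpositive since `p_τ(i) > 0`.
-/

section

variable {ι : Type*} [Fintype ι]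

noncomputable def softmax (ℓ : ι → ℝ) (τ : ℝ) (i : ι) : ℝ :=
  exp (ℓ i / τ) / ∑ j, exp (ℓ j / τ)

theorem sum_exp_div_pos (ℓ : ι → ℝ) (τ : ℝ) (i : ι) : 0 < ∑ j, exp (ℓ j / τ) :=
  sum_pos (fun _ _ => exp_pos _) ⟨i, mem_univ i⟩

theorem softmax_pos (ℓ : ι → ℝ) (τ : ℝ) (i : ι) : 0 < softmax ℓ τ i :=
  div_pos (exp_pos _) (sum_exp_div_pos ℓ τ i)

theorem sum_softmax_eq_one (ℓ : ι → ℝ) (τ : ℝ) (i : ι) : ∑ j, softmax ℓ τ j = 1 := by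
  simp only [softmax, ← sum_div]
  exact div_self (sum_exp_div_pos ℓ τ i).ne'

theorem sum_softmax_mul_sub (ℓ : ι → ℝ) (τ : ℝ) (i : ι) :
    ∑ j, softmax ℓ τ j * (ℓ i - ℓ j) = ℓ i - ∑ j, softmax ℓ τ j * ℓ j := by
  simp only [mul_sub, sum_sub_distrib, ← sum_mul, sum_softmax_eq_one ℓ τ i, one_mul]

theorem hasDerivAt_exp_const_div (a : ℝ) {τ : ℝ} (hτ : τ ≠ 0) :
    HasDerivAt (fun t => exp (a / t)) (-(exp (a / τ) * a) / τ ^ 2) τ := by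
  have h := ((hasDerivAt_inv hτ).const_mul a).exp
  simp only [← div_eq_mul_inv] at h
  convert h using 1
  ring

theorem hasDerivAt_softmax_temperature (ℓ : ι → ℝ) {τ : ℝ} (hτ : τ ≠ 0) (i : ι) :
    HasDerivAt (fun t => softmax ℓ t i)
      (-(softmax ℓ τ i * ∑ j, softmax ℓ τ j * (ℓ i - ℓ j)) / τ ^ 2) τ := by
  have hS := sum_exp_div_pos ℓ τ i
  have h := (hasDerivAt_exp_const_div (ℓ i) hτ).div
    (HasDerivAt.fun_sum fun j _ => hasDerivAt_exp_const_div (ℓ j) hτ) hS.ne'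
  refine (h : HasDerivAt (fun t => softmax ℓ t i) _ τ).congr_deriv ?_
  have hmean : ∑ j, softmax ℓ τ j * ℓ j = (∑ j, exp (ℓ j / τ) * ℓ j) / ∑ j, exp (ℓ j / τ) := by
    simp only [softmax, div_mul_eq_mul_div, sum_div]
  rw [sum_softmax_mul_sub, hmean, ← sum_div, sum_neg_distrib]
  unfold softmax
  generalize ∑ j, exp (ℓ j / τ) = S at hS ⊢
  field_simp
  ring

end

theorem softmax_deriv_sufficiently_accurate_general (V : ℕ) (ℓ : Fin V → ℝ)
    (τ Δ : ℝ) (hτ : 0 < τ) (hΔ : 0 ≤ Δ) (i : Fin V)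
    (hacc : Δ ≤ ∑ j, (Real.exp (ℓ j / τ) / ∑ j', Real.exp (ℓ j' / τ)) * (ℓ i - ℓ j)) :
    deriv (fun t : ℝ => Real.exp (ℓ i / t) / ∑ j, Real.exp (ℓ j / t)) τ ≤
      -((Real.exp (ℓ i / τ) / ∑ j, Real.exp (ℓ j / τ)) * Δ) / τ ^ 2 ∧
    -((Real.exp (ℓ i / τ) / ∑ j, Real.exp (ℓ j / τ)) * Δ) / τ ^ 2 ≤ 0 := by
  have hp := softmax_pos ℓ τ i
  change Δ ≤ ∑ j, softmax ℓ τ j * (ℓ i - ℓ j) at hacc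
  change deriv (fun t => softmax ℓ t i) τ ≤ -(softmax ℓ τ i * Δ) / τ ^ 2 ∧
    -(softmax ℓ τ i * Δ) / τ ^ 2 ≤ 0
  rw [(hasDerivAt_softmax_temperature ℓ hτ.ne' i).deriv]
  constructor
  · gcongr
  · exact div_nonpos_of_nonpos_of_nonneg (neg_nonpos.mpr (by positivity)) (by positivity)

/-- under the 'sufficiently accurate' condition
`∑ j, p_τ(j)(ℓ_i − ℓ_j) ≥ Δ⁺` with `Δ⁺ ≥ 0`, the derivative of the softmax probability
of token `i` with respect to the temperature satisfies
`∂p_τ(i)/∂τ ≤ −p_τ(i)·Δ⁺/τ² ≤ 0`. -/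
theorem softmax_deriv_sufficiently_accurate (V : ℕ) (hV : 0 < V) (ℓ : Fin V → ℝ)
    (τ Δ : ℝ) (hτ : 0 < τ) (hΔ : 0 ≤ Δ) (i : Fin V)
    (hacc : Δ ≤ ∑ j, (Real.exp (ℓ j / τ) / ∑ j', Real.exp (ℓ j' / τ)) * (ℓ i - ℓ j)) :
    deriv (fun t : ℝ => Real.exp (ℓ i / t) / ∑ j, Real.exp (ℓ j / t)) τ ≤
      -((Real.exp (ℓ i / τ) / ∑ j, Real.exp (ℓ j / τ)) * Δ) / τ ^ 2 ∧
    -((Real.exp (ℓ i / τ) / ∑ j, Real.exp (ℓ j / τ)) * Δ) / τ ^ 2 ≤ 0 :=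
  softmax_deriv_sufficiently_accurate_general V ℓ τ Δ hτ hΔ i hacc
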